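/- Let H be a complex inner product space, let b be a Hermitian sesquilinear form on a subspace containing u and u^DG, and suppose ‖u‖ = ‖u^DG‖ = 1, λ = b(u,u), and λ^DG = b(u^DG, u^DG) = λ^DG (u^DG, u^DG) with λ, λ^DG real. Then, with e = u − u^DG and the consistency term D = b(u^DG, u) − λ^DG (u^DG, u), the identity λ − λ^DG = b(e,e) − λ^DG (e,e) + D + D̄ holds. -/
import Mathlib


/-!
STATEMENT 15 (identity (3.16): the algebraic eigenvalue-error identity).
H is a complex inner product space with inner product (·,·) (linear in the
first slot), b a Hermitian sesquilinear form on a subspace H̃ containing u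
and u^DG, ‖u‖ = ‖u^DG‖ = 1, λ = b(u,u) and λ^DG = b(u^DG,u^DG) = λ^DG(u^DG,u^DG)
with λ, λ^DG real.  Then with e = u - u^DG and the consistency term
D = b(u^DG,u) - λ^DG(u^DG,u):
  λ - λ^DG = b(e,e) - λ^DG (e,e) + D + D̄.
-/

noncomputable section
open scoped InnerProductSpace

/-- inner product linear in the FIRST slot (the paper's convention); in terms
of Mathlib's inner product (conjugate-linear in the first slot) this is
`(u,v) = ⟪v,u⟫`. -/
def ip {H : Type*} [NormedAddCommGroup H] [InnerProductSpace ℂ H]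
    (u v : H) : ℂ := ⟪v, u⟫_ℂ

theorem eigenvalue_error_identity
    (H : Type*) [NormedAddCommGroup H] [InnerProductSpace ℂ H]
    -- the subspace H̃ on which b is defined
    (Ht : Submodule ℂ H)
    (b : H → H → ℂ)
    -- b is Hermitian on H̃
    (hherm : ∀ v ∈ Ht, ∀ w ∈ Ht, b v w = (starRingEnd ℂ) (b w v))
    -- b is sesquilinear on H̃ (linear in the first slot, conjugate-linear in
    -- the second slot)
    (haddl : ∀ v₁ ∈ Ht, ∀ v₂ ∈ Ht, ∀ w ∈ Ht, b (v₁ + v₂) w = b v₁ w + b v₂ w)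
    (haddr : ∀ v ∈ Ht, ∀ w₁ ∈ Ht, ∀ w₂ ∈ Ht, b v (w₁ + w₂) = b v w₁ + b v w₂)
    (hsmull : ∀ (c : ℂ), ∀ v ∈ Ht, ∀ w ∈ Ht, b (c • v) w = c * b v w)
    (hsmulr : ∀ (c : ℂ), ∀ v ∈ Ht, ∀ w ∈ Ht,
      b v (c • w) = (starRingEnd ℂ) c * b v w)
    -- the two normalized vectors and the two real numbers
    (u uDG : H) (hu : u ∈ Ht) (huDG : uDG ∈ Ht)
    (hnu : ‖u‖ = 1) (hnuDG : ‖uDG‖ = 1)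
    (lam lamDG : ℝ)
    (hlam : (lam : ℂ) = b u u)
    (hlamDG : (lamDG : ℂ) = b uDG uDG)
    (hlamDG' : (lamDG : ℂ) * ip uDG uDG = b uDG uDG) :
    (lam : ℂ) - lamDG =
      b (u - uDG) (u - uDG) - (lamDG : ℂ) * ip (u - uDG) (u - uDG)
        + (b uDG u - (lamDG : ℂ) * ip uDG u)
        + (starRingEnd ℂ) (b uDG u - (lamDG : ℂ) * ip uDG u) := by
  have hsubl : ∀ v₁ ∈ Ht, ∀ v₂ ∈ Ht, ∀ w ∈ Ht, b (v₁ - v₂) w = b v₁ w - b v₂ w := by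
    intro v₁ h1 v₂ h2 w hw
    have : b ((-1 : ℂ) • v₂) w = (-1 : ℂ) * b v₂ w := hsmull (-1) v₂ h2 w hw
    rw [sub_eq_add_neg, ← neg_one_smul ℂ v₂,
      haddl v₁ h1 _ (Ht.smul_mem _ h2) w hw, this]
    ring
  have hsubr : ∀ v ∈ Ht, ∀ w₁ ∈ Ht, ∀ w₂ ∈ Ht, b v (w₁ - w₂) = b v w₁ - b v w₂ := by
    intro v hv w₁ h1 w₂ h2
    have : b v ((-1 : ℂ) • w₂) = (starRingEnd ℂ) (-1) * b v w₂ :=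
      hsmulr (-1) v hv w₂ h2
    rw [sub_eq_add_neg, ← neg_one_smul ℂ w₂,
      haddr v hv w₁ h1 _ (Ht.smul_mem _ h2), this]
    simp; ring
  have he : u - uDG ∈ Ht := Ht.sub_mem hu huDG
  have hexp : b (u - uDG) (u - uDG) = b u u - b u uDG - b uDG u + b uDG uDG := by
    rw [hsubl u hu uDG huDG _ he, hsubr u hu u hu uDG huDG,
      hsubr uDG huDG u hu uDG huDG]
    ring
  have hc : b u uDG = (starRingEnd ℂ) (b uDG u) := hherm u hu uDG huDG
  have huu : (⟪u, u⟫_ℂ) = 1 := by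
    rw [inner_self_eq_norm_sq_to_K, hnu]; norm_num
  have huDGuDG : (⟪uDG, uDG⟫_ℂ) = 1 := by
    rw [inner_self_eq_norm_sq_to_K, hnuDG]; norm_num
  have hipexp2 : ip (u - uDG) (u - uDG)
      = 2 - ⟪u, uDG⟫_ℂ - ⟪uDG, u⟫_ℂ + ⟪uDG, uDG⟫_ℂ - 1 := by
    simp only [ip, inner_sub_left, inner_sub_right, huu, huDGuDG]
    ring
  rw [hexp, hipexp2, huDGuDG, hc]
  simp only [ip, map_sub, map_mul, Complex.conj_ofReal, inner_conj_symm,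
    RingHom.id_apply]
  rw [← hlam, ← hlamDG]
  ring
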